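/- Let A be a skew PBW extension of a ring R with variables x_1, …, x_n. Define F_0 := R and, for m ≥ 1, F_m := {f ∈ A : deg(f) ≤ m}. Then A is an ℕ-filtered ring with this filtration: F_m ⊆ F_{m+1}, ⋃_m F_m = A, and F_m · F_p ⊆ F_{m+p} for all m, p ≥ 0. Moreover, the associated graded ring Gr(A) = ⊕_{m≥0} F_m/F_{m−1} is a quasi-commutative skew PBW extension of R in the classes x̄_1, …, x̄_n of the variables: the standard monomials in x̄_1, …, x̄_n form a basis of Gr(A) as a free left R-module, x̄_i r = σ_i(r) x̄_i for every r ∈ R \ {0} and 1 ≤ i ≤ n, and x̄_j x̄_i = c_{i,j} x̄_i x̄_j for all i, j, where σ_i and c_{i,j} are the parameters of A. -/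

import Mathlib

/-- The standard monomial `x^α = x₁^{α₁} ⋯ xₙ^{αₙ}` (ordered product). -/
def stdMon {A : Type*} [Ring A] {n : ℕ} (x : Fin n → A) (α : Fin n → ℕ) : A :=
  (List.ofFn fun i => x i ^ α i).prod

/-- `A` is a skew PBW extension of `R` (embedded via `φ`) with variables `x₁,…,xₙ`. -/
def IsSkewPBWExt {R A : Type*} [Ring R] [Ring A] {n : ℕ} (φ : R →+* A) (x : Fin n → A) :
    Prop :=
  Function.Injective φ ∧
  (letI : Module R A := Module.compHom A φ;
    LinearIndependent R (stdMon x) ∧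
      Submodule.span R (Set.range (stdMon x)) = (⊤ : Submodule R A)) ∧
  (∀ i : Fin n, ∀ r : R, r ≠ 0 → ∃ c : R, c ≠ 0 ∧ ∃ s : R,
      x i * φ r - φ c * x i = φ s) ∧
  (∀ i j : Fin n, ∃ c : R, c ≠ 0 ∧ ∃ s : R, ∃ t : Fin n → R,
      x j * x i - φ c * (x i * x j) = φ s + ∑ k, φ (t k) * x k)

/-- `F_m = {f ∈ A | deg f ≤ m}`: the `R`-span of the standard monomials of degree `≤ m`. -/
def pbwFilt {R A : Type*} [Ring R] [Ring A] {n : ℕ} (φ : R →+* A) (x : Fin n → A)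
    (m : ℕ) : AddSubgroup A :=
  AddSubgroup.closure {a | ∃ (r : R) (α : Fin n → ℕ), (∑ i, α i) ≤ m ∧ a = φ r * stdMon x α}

/-!
Right multiplication by a variable raises the degree by at most one. For a standard monomial
`x^β` and a variable `x_i`, either `x^β x_i` is again a standard monomial, or the last variable
`x_j` of `x^β` has `j > i`, and `x_j x_i = c_{ij} x_i x_j + (terms of degree ≤ 1)` reduces the
claim to right multiplication by `x_j`; this is a descending induction on `i` inside an
induction on the degree, and scalars are moved to the left through `x_i r ∈ R x_i + R`.
Hence the filtration is multiplicative.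

In the associated graded ring the lower order terms vanish, so `x̄^β` is the class of `x^β` and
the commutation rules become `x̄_i r = σ_i(r) x̄_i` and `x̄_j x̄_i = c_{ij} x̄_i x̄_j`. A relation
among the `x̄^β` splits into homogeneous components; the component of degree `m` lifts to an
`R`-combination of the `x^β` with `|β| = m` that lies in `F_{m-1}`, so it is trivial by the
PBW basis of `A`.
-/

open Finset

section MultiIndex
variable {n : ℕ}

lemma sum_add_single (γ : Fin n → ℕ) (j : Fin n) :
    ∑ k, (γ + Pi.single j 1 : Fin n → ℕ) k = ∑ k, γ k + 1 := by
  simp [Finset.sum_add_distrib]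

lemma exists_eq_add_single_of_ne_zero {β : Fin n → ℕ} {k : Fin n} (hk : β k ≠ 0) :
    ∃ (γ : Fin n → ℕ) (j : Fin n),
      k ≤ j ∧ (∀ l, j < l → γ l = 0) ∧ β = γ + Pi.single j 1 := by
  classical
  set s := univ.filter fun l => β l ≠ 0
  have hs : s.Nonempty := ⟨k, by simp [s, hk]⟩
  have hβj : β (s.max' hs) ≠ 0 := by simpa [s] using s.max'_mem hs
  refine ⟨β - Pi.single (s.max' hs) 1, s.max' hs, s.le_max' k (by simp [s, hk]), ?_, ?_⟩
  · intro l hl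
    have : β l = 0 := by
      by_contra h
      exact (s.le_max' l (by simp [s, h])).not_gt hl
    simp [this]
  · funext l
    by_cases hl : l = s.max' hs
    · subst hl; simp; omega
    · simp [hl]

theorem multiIndex_induction {motive : (Fin n → ℕ) → Prop} (zero : motive 0)
    (add_single : ∀ γ j, (∀ l, j < l → γ l = 0) → motive γ → motive (γ + Pi.single j 1))
    (β : Fin n → ℕ) : motive β := by
  induction hd : ∑ k, β k using Nat.strong_induction_on generalizing β with
  | _ d ih =>
  by_cases h0 : β = 0
  · exact h0 ▸ zero
  · obtain ⟨k, hk⟩ := Function.ne_iff.mp h0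
    obtain ⟨γ, j, -, hγ, rfl⟩ := exists_eq_add_single_of_ne_zero hk
    exact add_single γ j hγ (ih _ (by rw [← hd, sum_add_single]; omega) γ rfl)

lemma eq_zero_or_eq_single_of_sum_le_one {α : Fin n → ℕ} (hα : ∑ i, α i ≤ 1) :
    α = 0 ∨ ∃ j, α = Pi.single j 1 := by
  by_cases h0 : α = 0
  · exact Or.inl h0
  obtain ⟨k, hk⟩ := Function.ne_iff.mp h0
  obtain ⟨γ, j, -, -, rfl⟩ := exists_eq_add_single_of_ne_zero hk
  rw [sum_add_single] at hα
  have hγ : γ = 0 := (Fintype.sum_eq_zero_iff_of_nonneg fun _ => Nat.zero_le _).1 (by omega)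
  exact Or.inr ⟨j, by simp [hγ]⟩

end MultiIndex

section StdMon
variable {A : Type*} [Ring A] {n : ℕ}

@[simp]
lemma stdMon_zero (x : Fin n → A) : stdMon x 0 = 1 :=
  List.prod_eq_one fun a ha => by
    obtain ⟨i, rfl⟩ := List.mem_ofFn.mp ha
    simp

lemma stdMon_succ (x : Fin (n + 1) → A) (α : Fin (n + 1) → ℕ) :
    stdMon x α = x 0 ^ α 0 * stdMon (Fin.tail x) (Fin.tail α) := by
  simp [stdMon, List.ofFn_succ, Fin.tail]

lemma stdMon_add_single (x : Fin n → A) {γ : Fin n → ℕ} {j : Fin n}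
    (hγ : ∀ l, j < l → γ l = 0) : stdMon x (γ + Pi.single j 1) = stdMon x γ * x j := by
  induction n with
  | zero => exact j.elim0
  | succ n ih =>
    rw [stdMon_succ, stdMon_succ x γ]
    rcases Fin.eq_zero_or_eq_succ j with rfl | ⟨j, rfl⟩
    · have htail : Fin.tail γ = 0 := funext fun l => hγ l.succ (Fin.succ_pos l)
      have htail' : Fin.tail (γ + Pi.single 0 1) = 0 := by
        funext l; simp [Fin.tail, hγ l.succ (Fin.succ_pos l)]
      simp [htail, htail', pow_succ]
    · have htail : Fin.tail (γ + Pi.single j.succ 1) = Fin.tail γ + Pi.single j 1 := by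
        funext l; simp [Fin.tail, Pi.single_apply]
      rw [htail, ih (Fin.tail x) (γ := Fin.tail γ)
        fun l hl => hγ l.succ (Fin.succ_lt_succ_iff.mpr hl)]
      simp [mul_assoc, Fin.tail]

lemma stdMon_single (x : Fin n → A) (j : Fin n) : stdMon x (Pi.single j 1) = x j := by
  simpa using stdMon_add_single x (γ := 0) (j := j) fun _ _ => rfl

end StdMon

section Filtration
variable {R A : Type*} [Ring R] [Ring A] {n : ℕ} (φ : R →+* A) (x : Fin n → A)

lemma pbwFilt_le_iff {m : ℕ} {S : AddSubgroup A} :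
    pbwFilt φ x m ≤ S ↔ ∀ r α, ∑ i, α i ≤ m → φ r * stdMon x α ∈ S := by
  rw [pbwFilt, AddSubgroup.closure_le]
  constructor
  · exact fun h r α hα => h ⟨r, α, hα, rfl⟩
  · rintro h _ ⟨r, α, hα, rfl⟩
    exact h r α hα

lemma map_mul_stdMon_mem_pbwFilt (r : R) {α : Fin n → ℕ} {m : ℕ} (hα : ∑ i, α i ≤ m) :
    φ r * stdMon x α ∈ pbwFilt φ x m :=
  AddSubgroup.subset_closure ⟨r, α, hα, rfl⟩

lemma stdMon_mem_pbwFilt {α : Fin n → ℕ} {m : ℕ} (hα : ∑ i, α i ≤ m) :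
    stdMon x α ∈ pbwFilt φ x m := by
  simpa using map_mul_stdMon_mem_pbwFilt φ x 1 hα

lemma map_mem_pbwFilt (r : R) (m : ℕ) : φ r ∈ pbwFilt φ x m := by
  simpa using map_mul_stdMon_mem_pbwFilt φ x r (α := 0) (by simp)

lemma var_mem_pbwFilt_one (i : Fin n) : x i ∈ pbwFilt φ x 1 := by
  simpa [stdMon_single] using stdMon_mem_pbwFilt φ x (α := Pi.single i 1) (by simp)

lemma pbwFilt_mono : Monotone (pbwFilt φ x) := fun _ _ h =>
  (pbwFilt_le_iff φ x).2 fun r _ hα => map_mul_stdMon_mem_pbwFilt φ x r (hα.trans h)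

lemma map_mul_mem_pbwFilt (r : R) {m : ℕ} {a : A} (ha : a ∈ pbwFilt φ x m) :
    φ r * a ∈ pbwFilt φ x m := by
  refine (pbwFilt_le_iff φ x (S := (pbwFilt φ x m).comap (AddMonoidHom.mulLeft (φ r)))).2
    (fun r' α hα => ?_) ha
  simpa [← mul_assoc] using map_mul_stdMon_mem_pbwFilt φ x (r * r') hα

lemma coe_pbwFilt_zero : (pbwFilt φ x 0 : Set A) = Set.range φ := by
  refine subset_antisymm ?_ (Set.range_subset_iff.2 fun r => map_mem_pbwFilt φ x r 0)
  refine (pbwFilt_le_iff φ x (S := φ.range.toAddSubgroup)).2 fun r α hα => ?_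
  have : α = 0 := (Fintype.sum_eq_zero_iff_of_nonneg fun _ => Nat.zero_le _).1 (Nat.le_zero.1 hα)
  simp [this]

lemma pbwFilt_le_span (m : ℕ) :
    letI := Module.compHom A φ
    (pbwFilt φ x m : Set A) ⊆ Submodule.span R (stdMon x '' {α | ∑ i, α i ≤ m}) := by
  let := Module.compHom A φ
  exact (pbwFilt_le_iff φ x (S := (Submodule.span R _).toAddSubgroup)).2 fun r α hα =>
    Submodule.smul_mem _ r (Submodule.subset_span ⟨α, hα, rfl⟩)

lemma iSup_pbwFilt
    (hspan : letI := Module.compHom A φ; Submodule.span R (Set.range (stdMon x)) = ⊤) :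
    ⨆ m, pbwFilt φ x m = ⊤ := by
  let := Module.compHom A φ
  have hdir : Directed (· ≤ ·) (pbwFilt φ x) := (pbwFilt_mono φ x).directed_le
  rw [eq_top_iff]
  rintro a -
  induction (hspan ▸ Submodule.mem_top : a ∈ Submodule.span R (Set.range (stdMon x)))
    using Submodule.span_induction with
  | mem _ h =>
    obtain ⟨α, rfl⟩ := h
    exact AddSubgroup.mem_iSup_of_mem _ (stdMon_mem_pbwFilt φ x le_rfl)
  | zero => exact zero_mem _
  | add _ _ _ _ hb hc => exact add_mem hb hc
  | smul r _ _ hb =>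
    obtain ⟨m, hm⟩ := (AddSubgroup.mem_iSup_of_directed hdir).1 hb
    exact AddSubgroup.mem_iSup_of_mem m (map_mul_mem_pbwFilt φ x r hm)

end Filtration

section Multiplicative
variable {R A : Type*} [Ring R] [Ring A] {n : ℕ} {φ : R →+* A} {x : Fin n → A}

lemma mul_mem_pbwFilt_of_stdMon_mul_mem {m k : ℕ} {y : A}
    (h : ∀ α, ∑ i, α i ≤ m → stdMon x α * y ∈ pbwFilt φ x k) {a : A}
    (ha : a ∈ pbwFilt φ x m) : a * y ∈ pbwFilt φ x k := by
  refine (pbwFilt_le_iff φ x (S := (pbwFilt φ x k).comap (AddMonoidHom.mulRight y))).2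
    (fun r α hα => ?_) ha
  simpa [mul_assoc] using map_mul_mem_pbwFilt φ x r (h α hα)

lemma mul_mem_pbwFilt_succ_of_mem_one {d : ℕ}
    (hφ : ∀ a ∈ pbwFilt φ x d, ∀ r, a * φ r ∈ pbwFilt φ x d)
    (hx : ∀ a ∈ pbwFilt φ x d, ∀ i, a * x i ∈ pbwFilt φ x (d + 1))
    {a b : A} (ha : a ∈ pbwFilt φ x d) (hb : b ∈ pbwFilt φ x 1) :
    a * b ∈ pbwFilt φ x (d + 1) := by
  refine (pbwFilt_le_iff φ x (S := (pbwFilt φ x (d + 1)).comap (AddMonoidHom.mulLeft a))).2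
    (fun r α hα => ?_) hb
  simp only [AddSubgroup.mem_comap, AddMonoidHom.coe_mulLeft, ← mul_assoc]
  rcases eq_zero_or_eq_single_of_sum_le_one hα with rfl | ⟨j, rfl⟩
  · simpa using pbwFilt_mono φ x d.le_succ (hφ a ha r)
  · simpa [stdMon_single] using hx _ (hφ a ha r) j

variable (hxφ : ∀ i r, x i * φ r ∈ pbwFilt φ x 1)
  (hxx : ∀ i j, i < j → ∃ c, x j * x i - φ c * (x i * x j) ∈ pbwFilt φ x 1)

include hxφ in
lemma mul_map_mem_pbwFilt_succ {d : ℕ}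
    (hφ : ∀ a ∈ pbwFilt φ x d, ∀ r, a * φ r ∈ pbwFilt φ x d)
    (hx : ∀ a ∈ pbwFilt φ x d, ∀ i, a * x i ∈ pbwFilt φ x (d + 1))
    {a : A} (ha : a ∈ pbwFilt φ x (d + 1)) (r : R) : a * φ r ∈ pbwFilt φ x (d + 1) := by
  refine mul_mem_pbwFilt_of_stdMon_mul_mem (fun β hβ => ?_) ha
  by_cases h0 : β = 0
  · simpa [h0] using map_mem_pbwFilt φ x r (d + 1)
  obtain ⟨k, hk⟩ := Function.ne_iff.mp h0
  obtain ⟨γ, j, -, hγ, rfl⟩ := exists_eq_add_single_of_ne_zero hk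
  rw [sum_add_single] at hβ
  rw [stdMon_add_single x hγ, mul_assoc]
  exact mul_mem_pbwFilt_succ_of_mem_one hφ hx
    (stdMon_mem_pbwFilt φ x (by omega)) (hxφ j r)

include hxx in
lemma mul_var_mem_pbwFilt_succ {d : ℕ}
    (hφ : ∀ a ∈ pbwFilt φ x d, ∀ r, a * φ r ∈ pbwFilt φ x d)
    (hx : ∀ a ∈ pbwFilt φ x d, ∀ i, a * x i ∈ pbwFilt φ x (d + 1))
    (i : Fin n) {a : A} (ha : a ∈ pbwFilt φ x (d + 1)) : a * x i ∈ pbwFilt φ x (d + 2) := by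
  induction i using WellFoundedGT.induction generalizing a with
  | _ i ih =>
  refine mul_mem_pbwFilt_of_stdMon_mul_mem (fun β hβ => ?_) ha
  by_cases htop : ∀ k, i < k → β k = 0
  · rw [← stdMon_add_single x htop]
    exact stdMon_mem_pbwFilt φ x (by rw [sum_add_single]; omega)
  push Not at htop
  obtain ⟨k, hik, hk⟩ := htop
  obtain ⟨γ, j, hkj, hγ, rfl⟩ := exists_eq_add_single_of_ne_zero hk
  rw [sum_add_single] at hβ
  obtain ⟨c, hc⟩ := hxx i j (hik.trans_le hkj)
  have hγd : stdMon x γ ∈ pbwFilt φ x d := stdMon_mem_pbwFilt φ x (by omega)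
  -- the second summand ends in `x j` with `j > i`, where the induction hypothesis applies
  have hsplit : stdMon x γ * x j * x i = stdMon x γ * (x j * x i - φ c * (x i * x j)) +
      stdMon x γ * φ c * x i * x j := by noncomm_ring
  rw [stdMon_add_single x hγ, hsplit]
  refine add_mem (pbwFilt_mono φ x (d + 1).le_succ ?_) (ih j (hik.trans_le hkj) ?_)
  · exact mul_mem_pbwFilt_succ_of_mem_one hφ hx hγd hc
  · exact hx _ (hφ _ hγd c) i

include hxφ hxx in
lemma pbwFilt_mul_map_and_mul_var (d : ℕ) :
    (∀ a ∈ pbwFilt φ x d, ∀ r, a * φ r ∈ pbwFilt φ x d) ∧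
      ∀ a ∈ pbwFilt φ x d, ∀ i, a * x i ∈ pbwFilt φ x (d + 1) := by
  induction d with
  | zero =>
    have h0 : ∀ a ∈ pbwFilt φ x 0, ∃ r, φ r = a := fun a ha => by
      rwa [← SetLike.mem_coe, coe_pbwFilt_zero] at ha
    constructor
    · intro a ha r
      obtain ⟨r', rfl⟩ := h0 a ha
      simpa using map_mem_pbwFilt φ x (r' * r) 0
    · intro a ha i
      obtain ⟨r', rfl⟩ := h0 a ha
      exact map_mul_mem_pbwFilt φ x r' (var_mem_pbwFilt_one φ x i)
  | succ d ih =>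
    exact ⟨fun a ha r => mul_map_mem_pbwFilt_succ hxφ ih.1 ih.2 ha r,
      fun a ha i => mul_var_mem_pbwFilt_succ hxx ih.1 ih.2 i ha⟩

include hxφ hxx in
lemma mul_map_mem_pbwFilt {m : ℕ} {a : A} (ha : a ∈ pbwFilt φ x m) (r : R) :
    a * φ r ∈ pbwFilt φ x m :=
  (pbwFilt_mul_map_and_mul_var hxφ hxx m).1 a ha r

include hxφ hxx in
lemma mul_var_mem_pbwFilt {m : ℕ} {a : A} (ha : a ∈ pbwFilt φ x m) (i : Fin n) :
    a * x i ∈ pbwFilt φ x (m + 1) :=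
  (pbwFilt_mul_map_and_mul_var hxφ hxx m).2 a ha i

include hxφ hxx in
lemma mul_stdMon_mem_pbwFilt {m : ℕ} {a : A} (ha : a ∈ pbwFilt φ x m) (β : Fin n → ℕ) :
    a * stdMon x β ∈ pbwFilt φ x (m + ∑ i, β i) := by
  induction β using multiIndex_induction with
  | zero => simpa using ha
  | add_single γ j hγ ih =>
    rw [stdMon_add_single x hγ, sum_add_single, ← add_assoc, ← mul_assoc]
    exact mul_var_mem_pbwFilt hxφ hxx ih j

include hxφ hxx in
theorem mul_mem_pbwFilt {m p : ℕ} {a b : A} (ha : a ∈ pbwFilt φ x m)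
    (hb : b ∈ pbwFilt φ x p) : a * b ∈ pbwFilt φ x (m + p) := by
  refine (pbwFilt_le_iff φ x (S := (pbwFilt φ x (m + p)).comap (AddMonoidHom.mulLeft a))).2
    (fun r α hα => ?_) hb
  simp only [AddSubgroup.mem_comap, AddMonoidHom.coe_mulLeft, ← mul_assoc]
  exact pbwFilt_mono φ x (by omega)
    (mul_stdMon_mem_pbwFilt hxφ hxx (mul_map_mem_pbwFilt hxφ hxx ha r) α)

end Multiplicative

lemma DirectSum.coe_decompose_sum_of_mem {ι M σ ι' : Type*} [DecidableEq ι] [AddCommMonoid M]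
    [SetLike σ M] [AddSubmonoidClass σ M] (ℳ : ι → σ) [DirectSum.Decomposition ℳ]
    (s : Finset ι') (d : ι' → ι) (f : ι' → M) (hf : ∀ k ∈ s, f k ∈ ℳ (d k)) (i : ι) :
    (DirectSum.decompose ℳ (∑ k ∈ s, f k) i : M) = ∑ k ∈ s with d k = i, f k := by
  rw [DirectSum.decompose_sum, DFinsupp.finsetSum_apply, AddSubmonoidClass.coe_finsetSum,
    Finset.sum_filter]
  refine Finset.sum_congr rfl fun k hk => ?_
  split_ifs with h
  · exact DirectSum.decompose_of_mem_same ℳ (h ▸ hf k hk)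
  · exact DirectSum.decompose_of_mem_ne ℳ (hf k hk) h

lemma AddMonoidHom.apply_mk_congr_index {A G : Type*} [AddGroup A] [AddGroup G]
    {F : ℕ → AddSubgroup A} (f : ∀ m, F m →+ G) {m m' : ℕ} (e : m = m') {a : A}
    (h : a ∈ F m) (h' : a ∈ F m') : f m ⟨a, h⟩ = f m' ⟨a, h'⟩ := by
  subst e; rfl

section Graded
variable {R A G : Type*} [Ring R] [Ring A] [Ring G] {n : ℕ} {φ : R →+* A} {x : Fin n → A}
  (gr : ∀ m, pbwFilt φ x m →+ G)
  (hmul : ∀ (m p : ℕ) (a : pbwFilt φ x m) (b : pbwFilt φ x p)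
      (hab : (a : A) * (b : A) ∈ pbwFilt φ x (m + p)),
      gr m a * gr p b = gr (m + p) ⟨(a : A) * (b : A), hab⟩)
  (hone : ∀ h1 : (1 : A) ∈ pbwFilt φ x 0, gr 0 ⟨1, h1⟩ = 1)
  (hker0 : (gr 0).ker = ⊥)
  (hker : ∀ m, (gr (m + 1)).ker = (pbwFilt φ x m).addSubgroupOf (pbwFilt φ x (m + 1)))

local notation "x̄" => fun i => gr 1 (Subtype.mk (x i) (var_mem_pbwFilt_one φ x i))

include hmul hone in
lemma gr_stdMon {m : ℕ} (β : Fin n → ℕ) (hβ : ∑ i, β i = m)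
    (h : stdMon x β ∈ pbwFilt φ x m) : gr m ⟨stdMon x β, h⟩ = stdMon x̄ β := by
  induction β using multiIndex_induction generalizing m with
  | zero =>
    obtain rfl : m = 0 := by simpa using hβ.symm
    have h1 : (1 : A) ∈ pbwFilt φ x 0 := by simpa using h
    simpa using hone h1
  | add_single γ j hγ ih =>
    obtain rfl : m = ∑ i, γ i + 1 := by rw [← hβ, sum_add_single]
    have hγm := stdMon_mem_pbwFilt φ x (le_refl (∑ i, γ i))
    have e : (⟨stdMon x (γ + Pi.single j 1), h⟩ : pbwFilt φ x (∑ i, γ i + 1)) =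
        ⟨stdMon x γ * x j, stdMon_add_single x hγ ▸ h⟩ := Subtype.ext (stdMon_add_single x hγ)
    rw [e, ← hmul _ 1 ⟨stdMon x γ, hγm⟩ ⟨x j, var_mem_pbwFilt_one φ x j⟩, ih rfl hγm,
      stdMon_add_single _ hγ]

include hmul hone in
lemma gr_map_mul_stdMon {m : ℕ} (r : R) (β : Fin n → ℕ) (hβ : ∑ i, β i = m)
    (h : φ r * stdMon x β ∈ pbwFilt φ x m) :
    gr m ⟨φ r * stdMon x β, h⟩ = gr 0 ⟨φ r, map_mem_pbwFilt φ x r 0⟩ * stdMon x̄ β := by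
  have hβm := stdMon_mem_pbwFilt φ x hβ.le
  rw [← gr_stdMon gr hmul hone β hβ hβm, hmul 0 m _ ⟨_, hβm⟩ (by simpa using h)]
  exact AddMonoidHom.apply_mk_congr_index gr (zero_add m).symm _ _

include hker in
lemma gr_succ_eq_zero {m : ℕ} {a : A} (h : a ∈ pbwFilt φ x (m + 1))
    (ha : a ∈ pbwFilt φ x m) : gr (m + 1) ⟨a, h⟩ = 0 := by
  rw [← AddMonoidHom.mem_ker, hker]
  exact ha

include hker in
lemma gr_succ_eq_of_sub_mem {m : ℕ} {a b : A} (ha : a ∈ pbwFilt φ x (m + 1))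
    (hb : b ∈ pbwFilt φ x (m + 1)) (hab : a - b ∈ pbwFilt φ x m) :
    gr (m + 1) ⟨a, ha⟩ = gr (m + 1) ⟨b, hb⟩ := by
  rw [← sub_eq_zero, ← map_sub]
  exact gr_succ_eq_zero gr hker (sub_mem ha hb) hab

include hker0 hker in
lemma mem_span_of_gr_eq_zero {m : ℕ} {a : A} (h : a ∈ pbwFilt φ x m)
    (h0 : gr m ⟨a, h⟩ = 0) :
    letI := Module.compHom A φ
    a ∈ Submodule.span R (stdMon x '' {α | ∑ i, α i < m}) := by
  let := Module.compHom A φ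
  rw [← AddMonoidHom.mem_ker] at h0
  cases m with
  | zero =>
    rw [hker0, AddSubgroup.mem_bot, AddSubgroup.mk_eq_zero] at h0
    exact h0 ▸ zero_mem _
  | succ m =>
    rw [hker] at h0
    simpa [Nat.lt_succ_iff] using pbwFilt_le_span φ x m h0

include hker0 in
lemma injective_gr_map (hφ : Function.Injective φ) :
    Function.Injective fun r => gr 0 ⟨φ r, map_mem_pbwFilt φ x r 0⟩ := fun _ _ e =>
  hφ (congrArg Subtype.val ((AddMonoidHom.ker_eq_bot_iff _).1 hker0 e))

include hmul hker in
lemma gr_var_mul_gr_map {i : Fin n} {r r' : R}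
    (h : x i * φ r - φ r' * x i ∈ pbwFilt φ x 0) :
    gr 1 ⟨x i, var_mem_pbwFilt_one φ x i⟩ * gr 0 ⟨φ r, map_mem_pbwFilt φ x r 0⟩ =
      gr 0 ⟨φ r', map_mem_pbwFilt φ x r' 0⟩ * gr 1 ⟨x i, var_mem_pbwFilt_one φ x i⟩ := by
  have hr' := map_mul_mem_pbwFilt φ x r' (var_mem_pbwFilt_one φ x i)
  have hr : x i * φ r ∈ pbwFilt φ x 1 := by
    simpa using add_mem (pbwFilt_mono φ x zero_le_one h) hr'
  rw [hmul 1 0 _ _ hr, hmul 0 1 _ _ hr']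
  exact gr_succ_eq_of_sub_mem gr hker _ _ h

include hmul hker in
lemma gr_var_mul_gr_var {i j : Fin n} {c : R} (hij : x i * x j ∈ pbwFilt φ x 2)
    (h : x j * x i - φ c * (x i * x j) ∈ pbwFilt φ x 1) :
    gr 1 ⟨x j, var_mem_pbwFilt_one φ x j⟩ * gr 1 ⟨x i, var_mem_pbwFilt_one φ x i⟩ =
      gr 0 ⟨φ c, map_mem_pbwFilt φ x c 0⟩ *
        (gr 1 ⟨x i, var_mem_pbwFilt_one φ x i⟩ * gr 1 ⟨x j, var_mem_pbwFilt_one φ x j⟩) := by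
  have hc := map_mul_mem_pbwFilt φ x c hij
  have hji : x j * x i ∈ pbwFilt φ x 2 := by
    simpa using add_mem (pbwFilt_mono φ x one_le_two h) hc
  rw [hmul 1 1 _ _ hji, hmul 1 1 _ _ hij, hmul 0 2 _ _ hc]
  exact gr_succ_eq_of_sub_mem gr hker _ _ h

variable (ψ : R →+* G) (hψ : ∀ r, ψ r = gr 0 ⟨φ r, map_mem_pbwFilt φ x r 0⟩)

include hmul hone hψ in
lemma gr_sum_map_mul_stdMon {m : ℕ} (t : Finset (Fin n → ℕ)) (ht : ∀ α ∈ t, ∑ i, α i = m)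
    (g : (Fin n → ℕ) → R) (h : ∑ α ∈ t, φ (g α) * stdMon x α ∈ pbwFilt φ x m) :
    gr m ⟨∑ α ∈ t, φ (g α) * stdMon x α, h⟩ = ∑ α ∈ t, ψ (g α) * stdMon x̄ α := by
  classical
  induction t using Finset.induction_on with
  | empty => exact map_zero (gr m)
  | insert α t hα ih =>
    have hα' := map_mul_stdMon_mem_pbwFilt φ x (g α) (ht α (mem_insert_self α t)).le
    have ht' : ∀ β ∈ t, ∑ i, β i = m := fun β hβ => ht β (mem_insert_of_mem hβ)
    have htm : ∑ β ∈ t, φ (g β) * stdMon x β ∈ pbwFilt φ x m :=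
      sum_mem fun β hβ => map_mul_stdMon_mem_pbwFilt φ x (g β) (ht' β hβ).le
    have e : (⟨∑ β ∈ insert α t, φ (g β) * stdMon x β, h⟩ : pbwFilt φ x m) =
        ⟨φ (g α) * stdMon x α, hα'⟩ + ⟨_, htm⟩ := Subtype.ext (sum_insert hα)
    rw [e, map_add, ih ht' htm, sum_insert hα, hψ,
      gr_map_mul_stdMon gr hmul hone _ _ (ht α (mem_insert_self α t))]

include hmul hone hker0 hker hψ in
theorem linearIndependent_gr_stdMon
    (hLI : letI := Module.compHom A φ; LinearIndependent R (stdMon x))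
    (Ggr : ℕ → AddSubgroup G) (hrange : ∀ m, (gr m).range = Ggr m)
    (hint : DirectSum.IsInternal Ggr) :
    letI := Module.compHom G ψ
    LinearIndependent R (stdMon x̄) := by
  classical
  let := Module.compHom A φ
  let := Module.compHom G ψ
  let := hint.chooseDecomposition
  rw [linearIndependent_iff']
  intro s g hsum β hβ
  set m := ∑ i, β i
  set t := s.filter fun α => ∑ i, α i = m
  have hhom : ∀ α, ψ (g α) * stdMon x̄ α ∈ Ggr (∑ i, α i) := fun α => by
    rw [← hrange, hψ, ← gr_map_mul_stdMon gr hmul hone _ _ rfl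
      (map_mul_stdMon_mem_pbwFilt φ x (g α) le_rfl)]
    exact AddMonoidHom.mem_range.2 ⟨_, rfl⟩
  have hcomp : ∑ α ∈ t, ψ (g α) * stdMon x̄ α = 0 := by
    rw [← DirectSum.coe_decompose_sum_of_mem Ggr s _ _ (fun α _ => hhom α),
      show ∑ α ∈ s, ψ (g α) * stdMon x̄ α = 0 from hsum]
    simp
  set e := ∑ α ∈ t, φ (g α) * stdMon x α
  have ht : ∀ α ∈ t, ∑ i, α i = m := fun α hα => (mem_filter.1 hα).2
  have he : e ∈ pbwFilt φ x m :=
    sum_mem fun α hα => map_mul_stdMon_mem_pbwFilt φ x _ (ht α hα).le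
  have hlow := mem_span_of_gr_eq_zero gr hker0 hker he
    (by rw [gr_sum_map_mul_stdMon gr hmul hone ψ hψ t ht g he, hcomp])
  have hhigh : e ∈ Submodule.span R (stdMon x '' {α | ∑ i, α i = m}) :=
    sum_mem fun α hα => Submodule.smul_mem _ _ (Submodule.subset_span ⟨α, ht α hα, rfl⟩)
  have hdisj : Disjoint {α : Fin n → ℕ | ∑ i, α i = m} {α | ∑ i, α i < m} :=
    Set.disjoint_left.2 fun α h1 h2 => (h2 : _ < m).ne h1
  have he0 : e = 0 := (hLI.disjoint_span_image hdisj).le_bot ⟨hhigh, hlow⟩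
  exact linearIndependent_iff'.1 hLI t g he0 β (mem_filter.2 ⟨hβ, rfl⟩)

include hmul hone hker hψ in
lemma gr_mem_span_stdMon {m : ℕ} (a : pbwFilt φ x m) :
    letI := Module.compHom G ψ
    gr m a ∈ Submodule.span R (Set.range (stdMon x̄)) := by
  let := Module.compHom G ψ
  obtain ⟨a, ha⟩ := a
  induction ha using AddSubgroup.closure_induction with
  | mem _ h =>
    obtain ⟨r, α, hα, rfl⟩ := h
    change gr m ⟨φ r * stdMon x α, map_mul_stdMon_mem_pbwFilt φ x r hα⟩ ∈ _
    rcases hα.lt_or_eq with hlt | heq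
    · obtain ⟨m, rfl⟩ := Nat.exists_eq_add_one_of_ne_zero (Nat.ne_zero_of_lt hlt)
      have hlow := map_mul_stdMon_mem_pbwFilt φ x r (Nat.lt_succ_iff.1 hlt)
      exact gr_succ_eq_zero gr hker _ hlow ▸ zero_mem _
    · rw [gr_map_mul_stdMon gr hmul hone r α heq, ← hψ]
      exact Submodule.smul_mem _ r (Submodule.subset_span ⟨α, rfl⟩)
  | zero => exact (map_zero (gr m)).symm ▸ zero_mem _
  | add _ _ _ _ hb hc =>
    have := add_mem hb hc
    rwa [← map_add] at this
  | neg _ _ hb =>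
    have := neg_mem hb
    rwa [← map_neg] at this

include hmul hone hker hψ in
theorem span_gr_stdMon_eq_top (Ggr : ℕ → AddSubgroup G) (hrange : ∀ m, (gr m).range = Ggr m)
    (hint : DirectSum.IsInternal Ggr) :
    letI := Module.compHom G ψ
    Submodule.span R (Set.range (stdMon x̄)) = ⊤ := by
  classical
  let := Module.compHom G ψ
  let := hint.chooseDecomposition
  rw [eq_top_iff]
  rintro g -
  induction g using DirectSum.Decomposition.inductionOn Ggr with
  | zero => exact zero_mem _
  | homogeneous g =>
    obtain ⟨a, ha⟩ : (g : G) ∈ (gr _).range := by rw [hrange]; exact g.2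
    exact ha ▸ gr_mem_span_stdMon gr hmul hone hker ψ hψ a
  | add _ _ hb hc => exact add_mem hb hc

end Graded

theorem stmt3_general {R A : Type*} [Ring R] [Ring A] {n : ℕ} (φ : R →+* A) (x : Fin n → A)
    (h : IsSkewPBWExt φ x)
    -- the parameters of A: σᵢ, δᵢ and the constants c_{ij}
    (σ δ : Fin n → R → R)
    (hσ : ∀ (i : Fin n) (r : R), x i * φ r = φ (σ i r) * x i + φ (δ i r))
    (c : Fin n → Fin n → R)
    (hrel : ∀ i j : Fin n, ∃ (s : R) (t : Fin n → R),
        x j * x i = φ (c i j) * (x i * x j) + φ s + ∑ k, φ (t k) * x k) :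
    -- (1) A is ℕ-filtered by the F_m, with F_0 = R
    (∀ m : ℕ, pbwFilt φ x m ≤ pbwFilt φ x (m + 1)) ∧
    ((⨆ m : ℕ, pbwFilt φ x m) = (⊤ : AddSubgroup A)) ∧
    (∀ m p : ℕ, ∀ a ∈ pbwFilt φ x m, ∀ b ∈ pbwFilt φ x p, a * b ∈ pbwFilt φ x (m + p)) ∧
    ((pbwFilt φ x 0 : Set A) = Set.range φ) ∧
    -- (2) any realization `G` of the associated graded ring `Gr(A) = ⊕ₘ F_m/F_{m-1}`
    -- is a quasi-commutative skew PBW extension of R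
    (∀ (G : Type*) [Ring G] (Ggr : ℕ → AddSubgroup G)
        (gr : ∀ m : ℕ, ↥(pbwFilt φ x m) →+ G),
      -- gr m realizes F_m/F_{m-1} as the m-th homogeneous component of G:
      (∀ m : ℕ, (gr m).range = Ggr m) →
      ((gr 0).ker = ⊥) →
      (∀ m : ℕ, (gr (m + 1)).ker =
        (pbwFilt φ x m).addSubgroupOf (pbwFilt φ x (m + 1))) →
      DirectSum.IsInternal Ggr →
      -- multiplication of G is induced by that of A:
      (∀ (m p : ℕ) (a : ↥(pbwFilt φ x m)) (b : ↥(pbwFilt φ x p))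
          (hab : (a : A) * (b : A) ∈ pbwFilt φ x (m + p)),
          gr m a * gr p b = gr (m + p) ⟨(a : A) * (b : A), hab⟩) →
      (∀ h1 : (1 : A) ∈ pbwFilt φ x 0, gr 0 ⟨1, h1⟩ = 1) →
      -- the data: R maps into G via ψ := gr 0 ∘ φ, and x̄ᵢ := gr 1 (xᵢ)
      ∀ (hφ0 : ∀ r : R, φ r ∈ pbwFilt φ x 0) (hx1 : ∀ i, x i ∈ pbwFilt φ x 1)
        (ψ : R →+* G), (∀ r : R, ψ r = gr 0 ⟨φ r, hφ0 r⟩) →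
      -- conclusion: G is a quasi-commutative skew PBW extension of R with
      -- variables x̄ᵢ and parameters σᵢ, c_{ij}
      (Function.Injective ψ ∧
        (letI : Module R G := Module.compHom G ψ;
          LinearIndependent R (stdMon fun i => gr 1 ⟨x i, hx1 i⟩) ∧
            Submodule.span R (Set.range (stdMon fun i => gr 1 ⟨x i, hx1 i⟩))
              = (⊤ : Submodule R G)) ∧
        (∀ (i : Fin n) (r : R), r ≠ 0 →
          gr 1 ⟨x i, hx1 i⟩ * ψ r = ψ (σ i r) * gr 1 ⟨x i, hx1 i⟩) ∧
        (∀ i j : Fin n,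
          gr 1 ⟨x j, hx1 j⟩ * gr 1 ⟨x i, hx1 i⟩ =
            ψ (c i j) * (gr 1 ⟨x i, hx1 i⟩ * gr 1 ⟨x j, hx1 j⟩)))) := by
  obtain ⟨hφ, ⟨hLI, hspan⟩, -, -⟩ := h
  have hxφ : ∀ i r, x i * φ r - φ (σ i r) * x i ∈ pbwFilt φ x 0 := fun i r => by
    rw [hσ, add_sub_cancel_left]
    exact map_mem_pbwFilt φ x _ 0
  have hxx : ∀ i j, x j * x i - φ (c i j) * (x i * x j) ∈ pbwFilt φ x 1 := fun i j => by
    obtain ⟨s, t, hst⟩ := hrel i j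
    rw [hst, add_assoc, add_sub_cancel_left]
    exact add_mem (map_mem_pbwFilt φ x s 1)
      (sum_mem fun k _ => map_mul_mem_pbwFilt φ x _ (var_mem_pbwFilt_one φ x k))
  have hxφ₁ : ∀ i r, x i * φ r ∈ pbwFilt φ x 1 := fun i r => by
    simpa using add_mem (pbwFilt_mono φ x zero_le_one (hxφ i r))
      (map_mul_mem_pbwFilt φ x (σ i r) (var_mem_pbwFilt_one φ x i))
  have hmulF : ∀ m p, ∀ a ∈ pbwFilt φ x m, ∀ b ∈ pbwFilt φ x p,
      a * b ∈ pbwFilt φ x (m + p) :=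
    fun _ _ _ ha _ hb => mul_mem_pbwFilt hxφ₁ (fun i j _ => ⟨c i j, hxx i j⟩) ha hb
  refine ⟨fun m => pbwFilt_mono φ x m.le_succ, iSup_pbwFilt φ x hspan, hmulF,
    coe_pbwFilt_zero φ x, ?_⟩
  intro G _ Ggr gr hrange hker0 hker hint hmul hone _ hx1 ψ hψ
  refine ⟨?_, ⟨linearIndependent_gr_stdMon gr hmul hone hker0 hker ψ hψ hLI Ggr hrange hint,
    span_gr_stdMon_eq_top gr hmul hone hker ψ hψ Ggr hrange hint⟩,
    fun i r _ => ?_, fun i j => ?_⟩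
  · simpa only [← hψ] using injective_gr_map gr hker0 hφ
  · rw [hψ, hψ]
    exact gr_var_mul_gr_map gr hmul hker (hxφ i r)
  · rw [hψ]
    exact gr_var_mul_gr_var gr hmul hker (hmulF 1 1 _ (hx1 i) _ (hx1 j)) (hxx i j)

/-- Theorem: a skew PBW extension `A` of `R` is ℕ-filtered by `F_m = {f | deg f ≤ m}`
(`F_0 = R`), and its associated graded ring `Gr(A) = ⊕ₘ F_m/F_{m-1}` is a
quasi-commutative skew PBW extension of `R` in the classes `x̄₁,…,x̄ₙ` of the variables,
with parameters `σᵢ`, `c_{ij}` those of `A`:  the standard monomials in the `x̄ᵢ` are a free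
left `R`-module basis of `Gr(A)`, `x̄ᵢ r = σᵢ(r) x̄ᵢ` and `x̄ⱼ x̄ᵢ = c_{ij} x̄ᵢ x̄ⱼ`. -/
theorem stmt3 {R A : Type*} [Ring R] [Ring A] {n : ℕ} (φ : R →+* A) (x : Fin n → A)
    (h : IsSkewPBWExt φ x)
    -- the parameters of A: σᵢ, δᵢ and the constants c_{ij}
    (σ δ : Fin n → R → R)
    (hσ : ∀ (i : Fin n) (r : R), x i * φ r = φ (σ i r) * x i + φ (δ i r))
    (hσinj : ∀ i, Function.Injective (σ i))
    (c : Fin n → Fin n → R) (hc : ∀ i j, c i j ≠ 0)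
    (hrel : ∀ i j : Fin n, ∃ (s : R) (t : Fin n → R),
        x j * x i = φ (c i j) * (x i * x j) + φ s + ∑ k, φ (t k) * x k) :
    -- (1) A is ℕ-filtered by the F_m, with F_0 = R
    (∀ m : ℕ, pbwFilt φ x m ≤ pbwFilt φ x (m + 1)) ∧
    ((⨆ m : ℕ, pbwFilt φ x m) = (⊤ : AddSubgroup A)) ∧
    (∀ m p : ℕ, ∀ a ∈ pbwFilt φ x m, ∀ b ∈ pbwFilt φ x p, a * b ∈ pbwFilt φ x (m + p)) ∧
    ((pbwFilt φ x 0 : Set A) = Set.range φ) ∧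
    -- (2) any realization `G` of the associated graded ring `Gr(A) = ⊕ₘ F_m/F_{m-1}`
    -- is a quasi-commutative skew PBW extension of R
    (∀ (G : Type*) [Ring G] (Ggr : ℕ → AddSubgroup G)
        (gr : ∀ m : ℕ, ↥(pbwFilt φ x m) →+ G),
      -- gr m realizes F_m/F_{m-1} as the m-th homogeneous component of G:
      (∀ m : ℕ, (gr m).range = Ggr m) →
      ((gr 0).ker = ⊥) →
      (∀ m : ℕ, (gr (m + 1)).ker =
        (pbwFilt φ x m).addSubgroupOf (pbwFilt φ x (m + 1))) →
      DirectSum.IsInternal Ggr →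
      -- multiplication of G is induced by that of A:
      (∀ (m p : ℕ) (a : ↥(pbwFilt φ x m)) (b : ↥(pbwFilt φ x p))
          (hab : (a : A) * (b : A) ∈ pbwFilt φ x (m + p)),
          gr m a * gr p b = gr (m + p) ⟨(a : A) * (b : A), hab⟩) →
      (∀ h1 : (1 : A) ∈ pbwFilt φ x 0, gr 0 ⟨1, h1⟩ = 1) →
      -- the data: R maps into G via ψ := gr 0 ∘ φ, and x̄ᵢ := gr 1 (xᵢ)
      ∀ (hφ0 : ∀ r : R, φ r ∈ pbwFilt φ x 0) (hx1 : ∀ i, x i ∈ pbwFilt φ x 1)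
        (ψ : R →+* G), (∀ r : R, ψ r = gr 0 ⟨φ r, hφ0 r⟩) →
      -- conclusion: G is a quasi-commutative skew PBW extension of R with
      -- variables x̄ᵢ and parameters σᵢ, c_{ij}
      (Function.Injective ψ ∧
        (letI : Module R G := Module.compHom G ψ;
          LinearIndependent R (stdMon fun i => gr 1 ⟨x i, hx1 i⟩) ∧
            Submodule.span R (Set.range (stdMon fun i => gr 1 ⟨x i, hx1 i⟩))
              = (⊤ : Submodule R G)) ∧
        (∀ (i : Fin n) (r : R), r ≠ 0 →
          gr 1 ⟨x i, hx1 i⟩ * ψ r = ψ (σ i r) * gr 1 ⟨x i, hx1 i⟩) ∧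
        (∀ i j : Fin n,
          gr 1 ⟨x j, hx1 j⟩ * gr 1 ⟨x i, hx1 i⟩ =
            ψ (c i j) * (gr 1 ⟨x i, hx1 i⟩ * gr 1 ⟨x j, hx1 j⟩)))) :=
  stmt3_general φ x h σ δ hσ c hrel
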